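/- arXiv:2001.02650 — 2 statements merged into one kernel-verified Lean document; each statement's English description precedes it below -/
import Mathlib

section
/- Let ε ≥ 0 and let n ≥ 2 be a natural number. Suppose P₁, P₂, …, Pₙ are nonnegative real numbers with Σᵢ Pᵢ = 1, and suppose that for every j with 2 ≤ j ≤ n one has P₁ ≤ exp(ε)·Pⱼ. Then P₁ ≤ exp(ε)/(exp(ε) + n − 1). -/
/-- **Probabilité de réidentification.** If `ε ≥ 0`, `n ≥ 2`, the `P i` are nonnegative
reals summing to `1` (probabilities of the `n` possible sensitive values), and the
ε-DP constraint forces `P 0 ≤ exp ε * P j` for every other index `j`, then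
`P 0 ≤ exp ε / (exp ε + n - 1)`. -/
theorem reidentification_probability (ε : ℝ) (hε : 0 ≤ ε) (n : ℕ) (hn : 2 ≤ n)
    (P : Fin n → ℝ) (hP0 : ∀ i, 0 ≤ P i) (hPsum : ∑ i, P i = 1)
    (hDP : ∀ j : Fin n, j ≠ ⟨0, by omega⟩ → P ⟨0, by omega⟩ ≤ Real.exp ε * P j) :
    P ⟨0, by omega⟩ ≤ Real.exp ε / (Real.exp ε + n - 1) := by
  set E := Real.exp ε with hE
  have hEpos : 0 < E := Real.exp_pos ε
  set z : Fin n := ⟨0, by omega⟩ with hz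
  have hsplit : ∑ i, P i = P z + ∑ j ∈ Finset.univ \ {z}, P j := by
    rw [Finset.sum_eq_add_sum_sdiff_singleton_of_mem (Finset.mem_univ z)]
  have hlow : ∀ j ∈ Finset.univ \ {z}, P z / E ≤ P j := by
    intro j hj
    rw [Finset.mem_sdiff, Finset.mem_singleton] at hj
    have := hDP j hj.2
    rw [div_le_iff₀ hEpos]
    linarith [this]
  have hcard : (Finset.univ \ {z} : Finset (Fin n)).card = n - 1 := by
    rw [Finset.card_sdiff_of_subset (by simp)]
    simp
  have hsum_low : ((n : ℝ) - 1) * (P z / E) ≤ ∑ j ∈ Finset.univ \ {z}, P j := by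
    have := Finset.card_nsmul_le_sum (Finset.univ \ {z}) P (P z / E) hlow
    rw [hcard] at this
    have hcast : ((n - 1 : ℕ) : ℝ) = (n : ℝ) - 1 := by
      have : 1 ≤ n := by omega
      push_cast [this]; ring
    rwa [nsmul_eq_mul, hcast] at this
  have hkey : P z + ((n : ℝ) - 1) * (P z / E) ≤ 1 := by
    have h1 : P z + ∑ j ∈ Finset.univ \ {z}, P j = 1 := by rw [← hsplit, hPsum]
    linarith
  have hden : 0 < E + (n : ℝ) - 1 := by
    have : (2 : ℝ) ≤ (n : ℝ) := by exact_mod_cast hn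
    linarith
  rw [le_div_iff₀ hden]
  have : P z * (E + (n : ℝ) - 1) = E * (P z + ((n : ℝ) - 1) * (P z / E)) := by
    field_simp; ring
  rw [this]
  calc E * (P z + ((n : ℝ) - 1) * (P z / E)) ≤ E * 1 := by
        apply mul_le_mul_of_nonneg_left hkey hEpos.le
    _ = E := mul_one E
end

section
/- Let Ω and Ω' be countable types, ε ≥ 0 a real number, and p, q : PMF Ω two probability mass functions such that p(ω) ≤ exp(ε)·q(ω) for all ω ∈ Ω. Then for any post-processing map f : Ω → PMF Ω', the pushed-forward distributions satisfy (p.bind f)(ω') ≤ exp(ε)·(q.bind f)(ω') for every ω' ∈ Ω'. -/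
open scoped ENNReal

/-- **Differential privacy is preserved by post-processing.** If the output
distributions `p, q` of a mechanism on two neighboring databases satisfy the ε-DP
inequality `p ω ≤ exp ε * q ω` for every outcome `ω`, then for any (possibly
randomized) post-processing `f : Ω → PMF Ω'`, the pushed-forward distributions
satisfy the same inequality. -/
theorem dp_post_processing {Ω Ω' : Type*} [Countable Ω] [Countable Ω']
    (ε : ℝ) (hε : 0 ≤ ε) (p q : PMF Ω)
    (h : ∀ ω : Ω, p ω ≤ ENNReal.ofReal (Real.exp ε) * q ω)
    (f : Ω → PMF Ω') :
    ∀ ω' : Ω', (p.bind f) ω' ≤ ENNReal.ofReal (Real.exp ε) * (q.bind f) ω' := by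
  intro ω'
  simp only [PMF.bind_apply]
  rw [← ENNReal.tsum_mul_left]
  refine ENNReal.tsum_le_tsum fun ω => ?_
  calc p ω * f ω ω' ≤ (ENNReal.ofReal (Real.exp ε) * q ω) * f ω ω' :=
        mul_le_mul_left (h ω) _
    _ = ENNReal.ofReal (Real.exp ε) * (q ω * f ω ω') := mul_assoc _ _ _
end
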